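/- The quadratic form ξ ↦ ξ·D_t ξ is positive definite (i.e. ξ·D_t ξ > 0 for every ξ ≠ 0) for all t > 0 if and only if the Hörmander condition V_{2n−1} = ℝ^{2n} holds. -/

import Mathlib

/-!
Writing `M = ∑ₖ bₖ bₖᵀ` with `bₖ` running over the `Re lₖ` and `Im lₖ`, one gets
`ξ ⬝ᵥ R_s M R_sᵀ ξ = ∑ₖ (ξ ⬝ᵥ R_s bₖ)²`, so `ξ ⬝ᵥ D_t ξ ≥ 0`, with equality iff every
`s ↦ ξ ⬝ᵥ exp (s A) bₖ` vanishes on `[0, t]`. Differentiating repeatedly at `s = 0`, and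
conversely summing the exponential series, this happens iff `ξ` is orthogonal to the Krylov
space `⨆ₘ Aᵐ V₀`. Since `N` takes values in `V₀`, the Krylov spaces of `A = F + NΩ` and of `F`
coincide, and in dimension `2n` the increasing chain `V_j` is stationary from `j = 2n - 1` on,
so the Krylov space of `F` is `V_{2n-1}`.
-/

open Matrix MeasureTheory intervalIntegral Set

namespace LinearMap

section Semiring

variable {R M : Type*} [Semiring R] [AddCommMonoid M] [Module R M]

def krylov (f : M →ₗ[R] M) (V : Submodule R M) : Submodule R M :=
  ⨆ m : ℕ, V.map (f ^ m)

variable {f g : M →ₗ[R] M} {V W : Submodule R M}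

theorem le_krylov : V ≤ f.krylov V := by
  simpa [krylov, Module.End.one_eq_id] using le_iSup (fun m : ℕ => V.map (f ^ m)) 0

theorem map_krylov_le : (f.krylov V).map f ≤ f.krylov V := by
  rw [krylov, Submodule.map_iSup]
  refine iSup_le fun m => ?_
  rw [← Submodule.map_comp, ← Module.End.mul_eq_comp, ← pow_succ']
  exact le_iSup (fun m : ℕ => V.map (f ^ m)) (m + 1)

theorem krylov_le_iff_forall_pow : f.krylov V ≤ W ↔ ∀ m : ℕ, V ≤ W.comap (f ^ m) := by
  simp only [krylov, iSup_le_iff, Submodule.map_le_iff_le_comap]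

theorem krylov_span_le_iff {s : Set M} :
    f.krylov (Submodule.span R s) ≤ W ↔ ∀ m : ℕ, ∀ x ∈ s, (f ^ m) x ∈ W := by
  simp only [krylov_le_iff_forall_pow, Submodule.span_le, Set.subset_def, SetLike.mem_coe,
    Submodule.mem_comap]

theorem krylov_le_of_map_le (hV : V ≤ W) (hW : W.map f ≤ W) : f.krylov V ≤ W := by
  refine krylov_le_iff_forall_pow.2 fun m => ?_
  induction m with
  | zero => simpa [Module.End.one_eq_id] using hV
  | succ m ih =>
    rw [pow_succ', Module.End.mul_eq_comp, Submodule.comap_comp]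
    exact ih.trans (Submodule.comap_mono (Submodule.map_le_iff_le_comap.1 hW))

theorem krylov_add_le_of_range_le (hg : range g ≤ V) : (f + g).krylov V ≤ f.krylov V := by
  refine krylov_le_of_map_le le_krylov ?_
  rintro _ ⟨x, hx, rfl⟩
  exact add_mem (map_krylov_le ⟨x, hx, rfl⟩) (le_krylov (hg ⟨x, rfl⟩))

end Semiring

theorem krylov_add_of_range_le {R M : Type*} [Ring R] [AddCommGroup M] [Module R M]
    {f g : M →ₗ[R] M} {V : Submodule R M} (hg : range g ≤ V) :
    (f + g).krylov V = f.krylov V :=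
  le_antisymm (krylov_add_le_of_range_le hg) <| by
    simpa using krylov_add_le_of_range_le (f := f + g) (g := -g) (by rwa [range_neg])

section DivisionRing

variable {K E : Type*} [DivisionRing K] [AddCommGroup E] [Module K E]
  (f : E →ₗ[K] E) (V : Submodule K E)

def krylovUpTo (j : ℕ) : Submodule K E :=
  ⨆ m ∈ Finset.range j, V.map (f ^ m)

theorem krylovUpTo_le_krylov (j : ℕ) : f.krylovUpTo V j ≤ f.krylov V :=
  iSup₂_le fun m _ => le_iSup (fun m : ℕ => V.map (f ^ m)) m

theorem krylovUpTo_mono : Monotone (f.krylovUpTo V) := fun _ _ hij =>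
  biSup_mono fun _ hm => Finset.range_subset_range.2 hij hm

theorem le_krylovUpTo_succ (j : ℕ) : V ≤ f.krylovUpTo V (j + 1) := by
  refine le_iSup₂_of_le 0 (Finset.mem_range.2 j.succ_pos) ?_
  simp [Module.End.one_eq_id]

theorem map_krylovUpTo_le (j : ℕ) : (f.krylovUpTo V j).map f ≤ f.krylovUpTo V (j + 1) := by
  simp only [krylovUpTo, Submodule.map_iSup, iSup₂_le_iff, ← Submodule.map_comp,
    ← Module.End.mul_eq_comp, ← pow_succ']
  exact fun m hm => le_iSup₂_of_le (m + 1) (by simpa using hm) le_rfl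

theorem krylov_le_krylovUpTo_of_eq {j : ℕ} (hj : f.krylovUpTo V (j + 1) = f.krylovUpTo V j) :
    f.krylov V ≤ f.krylovUpTo V (j + 1) :=
  krylov_le_of_map_le (le_krylovUpTo_succ f V j) (hj ▸ map_krylovUpTo_le f V j)

theorem krylovUpTo_eq_krylov [FiniteDimensional K E] {k : ℕ} (hk : Module.finrank K E ≤ k) :
    f.krylovUpTo V k = f.krylov V := by
  -- Until the chain becomes stationary, every step raises the dimension.
  have grow : ∀ j, f.krylov V ≤ f.krylovUpTo V j ∨ j ≤ Module.finrank K (f.krylovUpTo V j) := by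
    intro j
    induction j with
    | zero => exact Or.inr (Nat.zero_le _)
    | succ j ih =>
      by_cases hj : f.krylovUpTo V (j + 1) = f.krylovUpTo V j
      · exact Or.inl (krylov_le_krylovUpTo_of_eq f V hj)
      · have hlt := lt_of_le_of_ne (krylovUpTo_mono f V (Nat.le_add_right j 1)) (Ne.symm hj)
        have := Submodule.finrank_lt_finrank_of_lt hlt
        exact ih.imp (fun h => h.trans hlt.le) (by omega)
  refine le_antisymm (krylovUpTo_le_krylov f V k) ?_
  rcases grow k with h | h
  · exact h
  · rw [Submodule.eq_top_of_finrank_eq (le_antisymm (Submodule.finrank_le _) (hk.trans h))]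
    exact le_top

end DivisionRing

end LinearMap

theorem Submodule.eq_top_iff_forall_exists_dotProduct_ne_zero {K ι : Type*} [Field K] [Fintype ι]
    [DecidableEq ι] (W : Submodule K (ι → K)) :
    W = ⊤ ↔ ∀ ξ : ι → K, ξ ≠ 0 → ∃ x ∈ W, ξ ⬝ᵥ x ≠ 0 := by
  rw [← dualAnnihilator_eq_bot_iff, Submodule.eq_bot_iff, (dotProductEquiv K ι).surjective.forall]
  simp only [mem_dualAnnihilator, dotProductEquiv_apply_apply, LinearEquiv.map_eq_zero_iff]
  exact forall_congr' fun ξ => by rw [← not_imp_not]; push Not; rfl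

theorem eqOn_zero_of_hasDerivAt_of_eqOn_zero {g g' : ℝ → ℝ} {a b : ℝ}
    (hg : ∀ s, HasDerivAt g (g' s) s) (hg' : Continuous g') (hab : a < b)
    (h : EqOn g 0 (Icc a b)) : EqOn g' 0 (Icc a b) := by
  have hIoo : EqOn g' 0 (Ioo a b) := fun s hs =>
    (hg s).unique ((hasDerivAt_const s 0).congr_of_eventuallyEq
      (Filter.eventually_of_mem (Icc_mem_nhds hs.1 hs.2) h))
  simpa [closure_Ioo hab.ne] using hIoo.closure hg' continuous_const

theorem intervalIntegral_pos_iff_not_eqOn_zero {g : ℝ → ℝ} {a b : ℝ} (hg : Continuous g)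
    (hg₀ : 0 ≤ g) (hab : a < b) : 0 < ∫ s in a..b, g s ↔ ¬ EqOn g 0 (Icc a b) := by
  rw [(integral_nonneg hab.le fun s _ => hg₀ s).lt_iff_ne', not_iff_not,
    integral_eq_zero_iff_of_le_of_nonneg_ae hab.le (Filter.Eventually.of_forall hg₀)
      (hg.intervalIntegrable a b), Measure.restrict_congr_set Ioc_ae_eq_Icc]
  exact ⟨fun h => Measure.eqOn_Icc_of_ae_eq volume hab.ne h hg.continuousOn continuousOn_const,
    fun h => (ae_restrict_mem measurableSet_Icc).mono fun s hs => h hs⟩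

namespace Matrix

section CommSemiring

variable {R ι : Type*} [CommSemiring R] [Fintype ι] (ξ : ι → R)

def dotProductMulVecLin (x : ι → R) : Matrix ι ι R →ₗ[R] R where
  toFun B := ξ ⬝ᵥ B *ᵥ x
  map_add' B C := by simp [add_mulVec, dotProduct_add]
  map_smul' c B := by simp [smul_mulVec]

theorem dotProduct_conj_vecMulVec_self_mulVec (B : Matrix ι ι R) (v : ι → R) :
    ξ ⬝ᵥ (B * vecMulVec v v * Bᵀ) *ᵥ ξ = (ξ ⬝ᵥ B *ᵥ v) ^ 2 := by
  rw [mul_vecMulVec, vecMulVec_mul, vecMul_transpose, vecMulVec_mulVec, op_smul_eq_smul,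
    dotProduct_smul, smul_eq_mul, dotProduct_comm (B *ᵥ v) ξ, sq]

theorem dotProduct_conj_sum_vecMulVec_self_mulVec {κ : Type*} [Fintype κ] (B : Matrix ι ι R)
    (b : κ → ι → R) :
    ξ ⬝ᵥ (B * (∑ k, vecMulVec (b k) (b k)) * Bᵀ) *ᵥ ξ = ∑ k, (ξ ⬝ᵥ B *ᵥ b k) ^ 2 := by
  simp only [Matrix.mul_sum, Matrix.sum_mul, sum_mulVec, dotProduct_sum,
    dotProduct_conj_vecMulVec_self_mulVec]

theorem mulVecLin_pow [DecidableEq ι] (A : Matrix ι ι R) (m : ℕ) :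
    (A ^ m).mulVecLin = A.mulVecLin ^ m := by
  rw [← toLin'_apply', toLin'_pow, toLin'_apply']

end CommSemiring

variable {ι : Type*} [Fintype ι] [DecidableEq ι]

-- The calculus of `NormedSpace.exp` needs some normed-algebra structure on matrices; any one
-- induces the product topology, so the choice is invisible in the statements.
attribute [local instance] Matrix.linftyOpNormedRing Matrix.linftyOpNormedAlgebra

variable (A : Matrix ι ι ℝ) (ξ x : ι → ℝ)

theorem hasDerivAt_dotProduct_exp_smul_mulVec (s : ℝ) :
    HasDerivAt (fun u : ℝ => ξ ⬝ᵥ NormedSpace.exp (u • A) *ᵥ x)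
      (ξ ⬝ᵥ NormedSpace.exp (s • A) *ᵥ (A *ᵥ x)) s := by
  refine ((dotProductMulVecLin ξ x).toContinuousLinearMap.hasFDerivAt.comp_hasDerivAt s
    (hasDerivAt_exp_smul_const A s)).congr_deriv ?_
  exact congrArg (ξ ⬝ᵥ ·) (mulVec_mulVec _ _ _).symm

theorem continuous_dotProduct_exp_smul_mulVec :
    Continuous fun u : ℝ => ξ ⬝ᵥ NormedSpace.exp (u • A) *ᵥ x :=
  continuous_iff_continuousAt.2 fun s =>
    (hasDerivAt_dotProduct_exp_smul_mulVec A ξ x s).continuousAt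

theorem dotProduct_exp_smul_mulVec_eq_zero (h : ∀ m : ℕ, ξ ⬝ᵥ (A ^ m) *ᵥ x = 0) (s : ℝ) :
    ξ ⬝ᵥ NormedSpace.exp (s • A) *ᵥ x = 0 := by
  have := (dotProductMulVecLin ξ x).toContinuousLinearMap.map_tsum
    (NormedSpace.expSeries_summable' (𝕂 := ℝ) (s • A))
  rw [← congrFun (NormedSpace.exp_eq_tsum ℝ)] at this
  simpa [dotProductMulVecLin, smul_pow, smul_mulVec, h] using this

theorem forall_dotProduct_exp_smul_mulVec_eq_zero_iff {t : ℝ} (ht : 0 < t) :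
    (∀ s ∈ Icc 0 t, ξ ⬝ᵥ NormedSpace.exp (s • A) *ᵥ x = 0) ↔
      ∀ m : ℕ, ξ ⬝ᵥ (A ^ m) *ᵥ x = 0 := by
  refine ⟨fun h m => ?_, fun h s _ => dotProduct_exp_smul_mulVec_eq_zero A ξ x h s⟩
  induction m generalizing x with
  | zero => simpa using h 0 ⟨le_rfl, ht.le⟩
  | succ m ih =>
    rw [pow_succ, ← mulVec_mulVec]
    exact ih _ (eqOn_zero_of_hasDerivAt_of_eqOn_zero
      (hasDerivAt_dotProduct_exp_smul_mulVec A ξ x)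
      (continuous_dotProduct_exp_smul_mulVec A ξ _) ht h)


theorem continuous_exp_smul : Continuous fun s : ℝ => NormedSpace.exp (s • A) :=
  NormedSpace.exp_continuous.comp (continuous_id.smul continuous_const)

noncomputable def gramian (M : Matrix ι ι ℝ) (t : ℝ) : Matrix ι ι ℝ :=
  of fun i j => ∫ s in (0 : ℝ)..t, (NormedSpace.exp (s • A) * M * (NormedSpace.exp (s • A))ᵀ) i j

theorem dotProduct_gramian_mulVec (M : Matrix ι ι ℝ) (t : ℝ) :
    ξ ⬝ᵥ gramian A M t *ᵥ ξ =
      ∫ s in (0 : ℝ)..t, ξ ⬝ᵥ (NormedSpace.exp (s • A) * M * (NormedSpace.exp (s • A))ᵀ) *ᵥ ξ := by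
  have hG : Continuous fun s : ℝ => NormedSpace.exp (s • A) * M * (NormedSpace.exp (s • A))ᵀ :=
    ((continuous_exp_smul A).matrix_mul continuous_const).matrix_mul
      (continuous_exp_smul A).matrix_transpose
  have hGij : ∀ i j, Continuous fun s : ℝ =>
      (NormedSpace.exp (s • A) * M * (NormedSpace.exp (s • A))ᵀ) i j :=
    fun i j => (continuous_apply_apply i j).comp hG
  simp only [gramian, dotProduct, mulVec, of_apply]
  rw [intervalIntegral.integral_finsetSum
    fun i _ => (by fun_prop : Continuous _).intervalIntegrable 0 t]
  refine Finset.sum_congr rfl fun i _ => ?_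
  rw [intervalIntegral.integral_const_mul, intervalIntegral.integral_finsetSum
    fun j _ => (by fun_prop : Continuous _).intervalIntegrable 0 t]
  simp only [intervalIntegral.integral_mul_const]

theorem dotProduct_gramian_sum_vecMulVec_mulVec_pos_iff {κ : Type*} [Fintype κ] (b : κ → ι → ℝ)
    {t : ℝ} (ht : 0 < t) :
    0 < ξ ⬝ᵥ gramian A (∑ k, vecMulVec (b k) (b k)) t *ᵥ ξ ↔
      ∃ x ∈ A.mulVecLin.krylov (Submodule.span ℝ (range b)), ξ ⬝ᵥ x ≠ 0 := by
  simp_rw [dotProduct_gramian_mulVec, dotProduct_conj_sum_vecMulVec_self_mulVec]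
  rw [intervalIntegral_pos_iff_not_eqOn_zero
    (g := fun s => ∑ k, (ξ ⬝ᵥ NormedSpace.exp (s • A) *ᵥ b k) ^ 2)
    (continuous_finsetSum _ fun k _ => (continuous_dotProduct_exp_smul_mulVec A ξ (b k)).pow 2)
    (fun s => Finset.sum_nonneg fun k _ => sq_nonneg _) ht, not_iff_comm]
  push Not
  calc (∀ x ∈ A.mulVecLin.krylov (Submodule.span ℝ (range b)), ξ ⬝ᵥ x = 0)
      ↔ ∀ m : ℕ, ∀ k, ξ ⬝ᵥ (A ^ m) *ᵥ b k = 0 := by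
        have := LinearMap.krylov_span_le_iff (f := A.mulVecLin) (s := range b)
          (W := LinearMap.ker (dotProductEquiv ℝ ι ξ))
        simpa [SetLike.le_def, ← mulVecLin_pow] using this
    _ ↔ ∀ k, ∀ s ∈ Icc 0 t, ξ ⬝ᵥ NormedSpace.exp (s • A) *ᵥ b k = 0 := by
        rw [forall_comm]
        exact forall_congr' fun k =>
          (forall_dotProduct_exp_smul_mulVec_eq_zero_iff A ξ (b k) ht).symm
    _ ↔ EqOn (fun s => ∑ k, (ξ ⬝ᵥ NormedSpace.exp (s • A) *ᵥ b k) ^ 2) 0 (Icc 0 t) := by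
        simp only [EqOn, Pi.zero_apply, Finset.sum_eq_zero_iff_of_nonneg fun _ _ => sq_nonneg _,
          Finset.mem_univ, forall_const, pow_eq_zero_iff two_ne_zero]
        exact ⟨fun h s hs k => h k s hs, fun h k s hs => h hs k⟩

end Matrix

theorem positive_definite_iff_hoermander_general (n K : ℕ)
    (Ω : Matrix (Fin n ⊕ Fin n) (Fin n ⊕ Fin n) ℝ)
    (F : Matrix (Fin n ⊕ Fin n) (Fin n ⊕ Fin n) ℝ)
    (l : Fin K → (Fin n ⊕ Fin n) → ℂ)
    (M : Matrix (Fin n ⊕ Fin n) (Fin n ⊕ Fin n) ℝ)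
    (hM : M = ∑ k, (vecMulVec (fun i => (l k i).re) (fun i => (l k i).re)
                  + vecMulVec (fun i => (l k i).im) (fun i => (l k i).im)))
    (N : Matrix (Fin n ⊕ Fin n) (Fin n ⊕ Fin n) ℝ)
    (hN : N = ∑ k, (vecMulVec (fun i => (l k i).re) (fun i => (l k i).im)
                  - vecMulVec (fun i => (l k i).im) (fun i => (l k i).re)))
    (A : Matrix (Fin n ⊕ Fin n) (Fin n ⊕ Fin n) ℝ) (hA : A = F + N * Ω)
    (V₀ : Submodule ℝ ((Fin n ⊕ Fin n) → ℝ))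
    (hV₀ : V₀ = Submodule.span ℝ
      (Set.range (fun k => fun i => (l k i).re) ∪ Set.range (fun k => fun i => (l k i).im)))
    (V : ℕ → Submodule ℝ ((Fin n ⊕ Fin n) → ℝ))
    (hV : ∀ j : ℕ, V j = ⨆ m ∈ Finset.range (j + 1), Submodule.map (F ^ m).mulVecLin V₀)
    (R : ℝ → Matrix (Fin n ⊕ Fin n) (Fin n ⊕ Fin n) ℝ)
    (hR : ∀ t, R t = NormedSpace.exp (t • A))
    (D : ℝ → Matrix (Fin n ⊕ Fin n) (Fin n ⊕ Fin n) ℝ)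
    (hD : ∀ t, D t = Matrix.of fun i j => ∫ s in (0:ℝ)..t, (R s * M * (R s)ᵀ) i j)
    :
    (∀ t : ℝ, 0 < t → ∀ ξ : (Fin n ⊕ Fin n) → ℝ, ξ ≠ 0 → 0 < ξ ⬝ᵥ (D t).mulVec ξ) ↔
      V (2 * n - 1) = ⊤ := by
  set b : Fin K ⊕ Fin K → (Fin n ⊕ Fin n) → ℝ :=
    Sum.elim (fun k i => (l k i).re) (fun k i => (l k i).im)
  have hV₀b : V₀ = Submodule.span ℝ (range b) := by rw [hV₀, Set.Sum.elim_range]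
  have hMb : M = ∑ k, vecMulVec (b k) (b k) := by
    rw [hM, Fintype.sum_sum_type, ← Finset.sum_add_distrib]
    rfl
  have hDt : D = gramian A M := funext fun t => by simp only [hD, hR, gramian]
  have hb : ∀ k, b k ∈ V₀ := fun k => hV₀b ▸ Submodule.subset_span (mem_range_self k)
  have hNΩ : LinearMap.range (N * Ω).mulVecLin ≤ V₀ := by
    rintro _ ⟨y, rfl⟩
    simp only [mulVecLin_apply, ← mulVec_mulVec, hN, sum_mulVec, sub_mulVec, vecMulVec_mulVec,
      op_smul_eq_smul]
    exact Submodule.sum_mem _ fun k _ => sub_mem (Submodule.smul_mem _ _ (hb (.inl k)))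
      (Submodule.smul_mem _ _ (hb (.inr k)))
  have hKA : A.mulVecLin.krylov V₀ = F.mulVecLin.krylov V₀ := by
    rw [hA, mulVecLin_add, LinearMap.krylov_add_of_range_le hNΩ]
  have hdim : Module.finrank ℝ ((Fin n ⊕ Fin n) → ℝ) ≤ 2 * n - 1 + 1 := by
    simp only [Module.finrank_fintype_fun_eq_card, Fintype.card_sum, Fintype.card_fin]
    omega
  have hVK : V (2 * n - 1) = F.mulVecLin.krylov V₀ := by
    rw [hV, ← LinearMap.krylovUpTo_eq_krylov _ _ hdim]
    simp only [LinearMap.krylovUpTo, mulVecLin_pow]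
  rw [hVK, ← hKA, Submodule.eq_top_iff_forall_exists_dotProduct_ne_zero, hDt, hMb, hV₀b]
  refine ⟨fun h ξ hξ => ?_, fun h t ht ξ hξ => ?_⟩
  · exact (dotProduct_gramian_sum_vecMulVec_mulVec_pos_iff A ξ b one_pos).1 (h 1 one_pos ξ hξ)
  · exact (dotProduct_gramian_sum_vecMulVec_mulVec_pos_iff A ξ b ht).2 (h ξ hξ)

/-- the quadratic form `ξ ↦ ξ·D_t ξ` is positive definite for all `t > 0`
if and only if the Hörmander condition `V_{2n-1} = ℝ^{2n}` holds. -/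
theorem positive_definite_iff_hoermander (n K : ℕ) (hn : 1 ≤ n)
    (Ω : Matrix (Fin n ⊕ Fin n) (Fin n ⊕ Fin n) ℝ)
    (hΩ : Ω = Matrix.fromBlocks 0 (-1) 1 0)
    (Q : Matrix (Fin n ⊕ Fin n) (Fin n ⊕ Fin n) ℝ) (hQ : Q.IsSymm)
    (F : Matrix (Fin n ⊕ Fin n) (Fin n ⊕ Fin n) ℝ) (hF : F = Ω * Q)
    (l : Fin K → (Fin n ⊕ Fin n) → ℂ)
    (M : Matrix (Fin n ⊕ Fin n) (Fin n ⊕ Fin n) ℝ)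
    (hM : M = ∑ k, (vecMulVec (fun i => (l k i).re) (fun i => (l k i).re)
                  + vecMulVec (fun i => (l k i).im) (fun i => (l k i).im)))
    (N : Matrix (Fin n ⊕ Fin n) (Fin n ⊕ Fin n) ℝ)
    (hN : N = ∑ k, (vecMulVec (fun i => (l k i).re) (fun i => (l k i).im)
                  - vecMulVec (fun i => (l k i).im) (fun i => (l k i).re)))
    (A : Matrix (Fin n ⊕ Fin n) (Fin n ⊕ Fin n) ℝ) (hA : A = F + N * Ω)
    (V₀ : Submodule ℝ ((Fin n ⊕ Fin n) → ℝ))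
    (hV₀ : V₀ = Submodule.span ℝ
      (Set.range (fun k => fun i => (l k i).re) ∪ Set.range (fun k => fun i => (l k i).im)))
    (V : ℕ → Submodule ℝ ((Fin n ⊕ Fin n) → ℝ))
    (hV : ∀ j : ℕ, V j = ⨆ m ∈ Finset.range (j + 1), Submodule.map (F ^ m).mulVecLin V₀)
    (R : ℝ → Matrix (Fin n ⊕ Fin n) (Fin n ⊕ Fin n) ℝ)
    (hR : ∀ t, R t = NormedSpace.exp (t • A))
    (D : ℝ → Matrix (Fin n ⊕ Fin n) (Fin n ⊕ Fin n) ℝ)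
    (hD : ∀ t, D t = Matrix.of fun i j => ∫ s in (0:ℝ)..t, (R s * M * (R s)ᵀ) i j)
    :
    (∀ t : ℝ, 0 < t → ∀ ξ : (Fin n ⊕ Fin n) → ℝ, ξ ≠ 0 → 0 < ξ ⬝ᵥ (D t).mulVec ξ) ↔
      V (2 * n - 1) = ⊤ :=
  positive_definite_iff_hoermander_general n K Ω F l M hM N hN A hA V₀ hV₀ V hV R hR D hD
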